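/- arXiv:1906.04503 — 12 statements merged into one kernel-verified Lean document; each statement's English description precedes it below -/
import Mathlib

section
/- Let u : ℤ × ℤ → ℂ satisfy (u_{n+1,m+1}+1)(u_{n,m+1}-1) = (u_{n+1,m}+1)(u_{n,m}-1) for all n,m ∈ ℤ, and assume u_{n,m+3} ≠ u_{n,m+2} and u_{n,m+1} ≠ u_{n,m} for all n,m ∈ ℤ. Then the cross-ratio W_{n,m} = ((u_{n,m+3}-u_{n,m+1})(u_{n,m+2}-u_{n,m})) / ((u_{n,m+3}-u_{n,m+2})(u_{n,m+1}-u_{n,m})) satisfies W_{n+1,m} = W_{n,m} for all n,m ∈ ℤ. -/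
/-!
Write `a = u n` and `b = u (n + 1)`. The lattice equation says that `(b k + 1) * (a k - 1)` does
not depend on `k`. If this constant `c` is nonzero, then `b k = c / (a k - 1) - 1` is the image of
`a k` under a fixed Möbius transformation, which preserves cross-ratios. If `c = 0`, then at each
`k` either `a k = 1` or `b k = -1`, and since consecutive values differ the two cases alternate in
`k`. Hence either `a m = a (m + 2)` and `b (m + 1) = b (m + 3)`, or the other way round, and both
cross-ratios vanish.
-/

section CrossRatio

variable {K : Type*} [Field K]

def crossRatio (z₀ z₁ z₂ z₃ : K) : K :=
  ((z₃ - z₁) * (z₂ - z₀)) / ((z₃ - z₂) * (z₁ - z₀))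

theorem crossRatio_eq_zero {z₀ z₁ z₂ z₃ : K} (h : z₃ = z₁ ∨ z₂ = z₀) :
    crossRatio z₀ z₁ z₂ z₃ = 0 := by
  rcases h with h | h <;> simp [crossRatio, h]

theorem crossRatio_div_sub_add {c : K} (hc : c ≠ 0) (d e : K) {z₀ z₁ z₂ z₃ : K}
    (h₀ : z₀ - d ≠ 0) (h₁ : z₁ - d ≠ 0) (h₂ : z₂ - d ≠ 0) (h₃ : z₃ - d ≠ 0) :
    crossRatio (c / (z₀ - d) + e) (c / (z₁ - d) + e) (c / (z₂ - d) + e) (c / (z₃ - d) + e)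
      = crossRatio z₀ z₁ z₂ z₃ := by
  set k := c ^ 2 / ((z₀ - d) * (z₁ - d) * (z₂ - d) * (z₃ - d))
  have hk : k ≠ 0 := by simp [k, hc, h₀, h₁, h₂, h₃]
  have hnum : (c / (z₃ - d) + e - (c / (z₁ - d) + e)) * (c / (z₂ - d) + e - (c / (z₀ - d) + e))
      = k * ((z₃ - z₁) * (z₂ - z₀)) := by
    simp only [k]
    field_simp
    ring
  have hden : (c / (z₃ - d) + e - (c / (z₂ - d) + e)) * (c / (z₁ - d) + e - (c / (z₀ - d) + e))
      = k * ((z₃ - z₂) * (z₁ - z₀)) := by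
    simp only [k]
    field_simp
    ring
  rw [crossRatio, hnum, hden, mul_div_mul_left _ _ hk, crossRatio]

end CrossRatio

section Lattice

variable {K : Type*} [Field K] {a b : ℤ → K}

theorem eq_neg_one_succ_of_eq_one (ha : ∀ k, a (k + 1) ≠ a k) (hab : ∀ k, b k = -1 ∨ a k = 1)
    {k : ℤ} (hk : a k = 1) : b (k + 1) = -1 :=
  (hab (k + 1)).resolve_right fun h => ha k (h.trans hk.symm)

theorem eq_one_succ_of_eq_neg_one (hb : ∀ k, b (k + 1) ≠ b k) (hab : ∀ k, b k = -1 ∨ a k = 1)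
    {k : ℤ} (hk : b k = -1) : a (k + 1) = 1 :=
  (hab (k + 1)).resolve_left fun h => hb k (h.trans hk.symm)

theorem crossRatio_eq_zero_of_forall_eq_neg_one_or_eq_one (ha : ∀ k, a (k + 1) ≠ a k)
    (hb : ∀ k, b (k + 1) ≠ b k) (hab : ∀ k, b k = -1 ∨ a k = 1) (m : ℤ) :
    crossRatio (b m) (b (m + 1)) (b (m + 2)) (b (m + 3)) = 0 ∧
      crossRatio (a m) (a (m + 1)) (a (m + 2)) (a (m + 3)) = 0 := by
  have ha' {k : ℤ} := eq_neg_one_succ_of_eq_one ha hab (k := k)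
  have hb' {k : ℤ} := eq_one_succ_of_eq_neg_one hb hab (k := k)
  rw [show m + 3 = m + 1 + 1 + 1 by ring, show m + 2 = m + 1 + 1 by ring]
  rcases hab m with hbm | ham
  · have ha₁ := hb' hbm
    have hb₂ := ha' ha₁
    exact ⟨crossRatio_eq_zero (.inr (hb₂.trans hbm.symm)),
      crossRatio_eq_zero (.inl ((hb' hb₂).trans ha₁.symm))⟩
  · have hb₁ := ha' ham
    have ha₂ := hb' hb₁
    exact ⟨crossRatio_eq_zero (.inl ((ha' ha₂).trans hb₁.symm)),
      crossRatio_eq_zero (.inr (ha₂.trans ham.symm))⟩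

theorem crossRatio_eq_of_add_one_mul_sub_one_eq
    (h : ∀ k, (b (k + 1) + 1) * (a (k + 1) - 1) = (b k + 1) * (a k - 1))
    (ha : ∀ k, a (k + 1) ≠ a k) (hb : ∀ k, b (k + 1) ≠ b k) (m : ℤ) :
    crossRatio (b m) (b (m + 1)) (b (m + 2)) (b (m + 3))
      = crossRatio (a m) (a (m + 1)) (a (m + 2)) (a (m + 3)) := by
  set c := (b 0 + 1) * (a 0 - 1)
  have hc (k : ℤ) : (b k + 1) * (a k - 1) = c := by
    simpa using (show Function.Periodic (fun k ↦ (b k + 1) * (a k - 1)) 1 from h).int_mul_eq k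
  by_cases hc₀ : c = 0
  · have hab (k : ℤ) : b k = -1 ∨ a k = 1 := by
      simpa [hc₀, sub_eq_zero, add_eq_zero_iff_eq_neg] using hc k
    obtain ⟨hb₀, ha₀⟩ := crossRatio_eq_zero_of_forall_eq_neg_one_or_eq_one ha hb hab m
    rw [hb₀, ha₀]
  · have ha₁ (k : ℤ) : a k - 1 ≠ 0 := fun h₀ ↦ hc₀ (by rw [← hc k, h₀, mul_zero])
    have hb_eq (k : ℤ) : b k = c / (a k - 1) + -1 := by
      rw [← hc k, mul_div_cancel_right₀ _ (ha₁ k)]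
      ring
    simp only [hb_eq]
    exact crossRatio_div_sub_add hc₀ 1 (-1) (ha₁ _) (ha₁ _) (ha₁ _) (ha₁ _)

end Lattice

theorem stmt_2_general (u : ℤ → ℤ → ℂ)
    (heq : ∀ n m : ℤ,
      (u (n + 1) (m + 1) + 1) * (u n (m + 1) - 1)
        = (u (n + 1) m + 1) * (u n m - 1))
    (hne2 : ∀ n m : ℤ, u n (m + 1) ≠ u n m) :
    ∀ n m : ℤ,
      ((u (n + 1) (m + 3) - u (n + 1) (m + 1)) * (u (n + 1) (m + 2) - u (n + 1) m))
          / ((u (n + 1) (m + 3) - u (n + 1) (m + 2)) * (u (n + 1) (m + 1) - u (n + 1) m))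
        = ((u n (m + 3) - u n (m + 1)) * (u n (m + 2) - u n m))
          / ((u n (m + 3) - u n (m + 2)) * (u n (m + 1) - u n m)) := fun n ↦
  crossRatio_eq_of_add_one_mul_sub_one_eq (heq n) (hne2 n) (hne2 (n + 1))

/-- For the lattice equation with `θ = 1`, the cross-ratio
`W_{n,m} = ((u_{n,m+3}-u_{n,m+1})(u_{n,m+2}-u_{n,m}))/((u_{n,m+3}-u_{n,m+2})(u_{n,m+1}-u_{n,m}))`
is a first integral in the m-direction: `W_{n+1,m} = W_{n,m}`. -/
theorem stmt_2 (u : ℤ → ℤ → ℂ)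
    (heq : ∀ n m : ℤ,
      (u (n + 1) (m + 1) + 1) * (u n (m + 1) - 1)
        = (u (n + 1) m + 1) * (u n m - 1))
    (hne1 : ∀ n m : ℤ, u n (m + 3) ≠ u n (m + 2))
    (hne2 : ∀ n m : ℤ, u n (m + 1) ≠ u n m) :
    ∀ n m : ℤ,
      ((u (n + 1) (m + 3) - u (n + 1) (m + 1)) * (u (n + 1) (m + 2) - u (n + 1) m))
          / ((u (n + 1) (m + 3) - u (n + 1) (m + 2)) * (u (n + 1) (m + 1) - u (n + 1) m))
        = ((u n (m + 3) - u n (m + 1)) * (u n (m + 2) - u n m))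
          / ((u n (m + 3) - u n (m + 2)) * (u n (m + 1) - u n m)) :=
  stmt_2_general u heq hne2
end

section
/- Let M ≥ 1 and let θ ∈ ℂ be a primitive M-th root of unity. Let u : ℤ × ℤ → ℂ satisfy (u_{n+1,m+1}+1)(u_{n,m+1}-1) = θ (u_{n+1,m}+1)(u_{n,m}-1) for all n,m ∈ ℤ, and assume u_{n,m+3M} ≠ u_{n,m+2M} and u_{n,m+M} ≠ u_{n,m} for all n,m ∈ ℤ. Then the function W_{n,m} = ((u_{n,m+3M}-u_{n,m+M})(u_{n,m+2M}-u_{n,m})) / ((u_{n,m+3M}-u_{n,m+2M})(u_{n,m+M}-u_{n,m})) satisfies W_{n+1,m} = W_{n,m} for all n,m ∈ ℤ, i.e. it is a first integral of order 3M in the m-direction. -/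
/-!
Along each column `n`, the product `(u_{n+1,m} + 1)(u_{n,m} - 1)` gets multiplied by `θ` when `m`
increases by one, so it is `M`-periodic in `m`. Hence the four values `u_{n+1,m+kM}`, `k = 0,…,3`,
are the images of the `u_{n,m+kM}` under one and the same Möbius map `a ↦ c / (a - 1) - 1`,
which preserves cross-ratios; `W` is exactly such a cross-ratio.
-/

open Function

/-- The cross-ratio is invariant under `x ↦ c / x`; with denominators cleared this holds on the whole
hyperbola `x * y = c`, including `c = 0`. -/
theorem cross_ratio_eq_of_mul_eq {R : Type*} [CommRing R] {x₀ x₁ x₂ x₃ y₀ y₁ y₂ y₃ c : R}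
    (h₀ : x₀ * y₀ = c) (h₁ : x₁ * y₁ = c) (h₂ : x₂ * y₂ = c) (h₃ : x₃ * y₃ = c) :
    (x₃ - x₁) * (x₂ - x₀) * ((y₃ - y₂) * (y₁ - y₀))
      = (y₃ - y₁) * (y₂ - y₀) * ((x₃ - x₂) * (x₁ - x₀)) := by
  grind

section Lattice

variable {R : Type*} [CommRing R]

def edgeProduct (u : ℤ → ℤ → R) (n m : ℤ) : R := (u (n + 1) m + 1) * (u n m - 1)

variable {θ : R} {u : ℤ → ℤ → R}

theorem edgeProduct_add_nat
    (heq : ∀ n m : ℤ, (u (n + 1) (m + 1) + 1) * (u n (m + 1) - 1)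
      = θ * ((u (n + 1) m + 1) * (u n m - 1)))
    (n m : ℤ) (j : ℕ) : edgeProduct u n (m + j) = θ ^ j * edgeProduct u n m := by
  induction j with
  | zero => simp
  | succ j ih =>
    rw [Nat.cast_succ, ← add_assoc, edgeProduct, heq, ← edgeProduct, ih, pow_succ]
    ring

theorem edgeProduct_periodic
    (heq : ∀ n m : ℤ, (u (n + 1) (m + 1) + 1) * (u n (m + 1) - 1)
      = θ * ((u (n + 1) m + 1) * (u n m - 1)))
    {M : ℕ} (hθM : θ ^ M = 1) (n : ℤ) : Periodic (edgeProduct u n) M := fun m => by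
  rw [edgeProduct_add_nat heq, hθM, one_mul]

end Lattice

theorem stmt_3_general (M : ℕ) (θ : ℂ) (hθM : θ ^ M = 1)
    (u : ℤ → ℤ → ℂ)
    (heq : ∀ n m : ℤ,
      (u (n + 1) (m + 1) + 1) * (u n (m + 1) - 1)
        = θ * ((u (n + 1) m + 1) * (u n m - 1)))
    (hne1 : ∀ n m : ℤ, u n (m + 3 * M) ≠ u n (m + 2 * M))
    (hne2 : ∀ n m : ℤ, u n (m + M) ≠ u n m) :
    ∀ n m : ℤ,
      ((u (n + 1) (m + 3 * M) - u (n + 1) (m + M)) * (u (n + 1) (m + 2 * M) - u (n + 1) m))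
          / ((u (n + 1) (m + 3 * M) - u (n + 1) (m + 2 * M)) * (u (n + 1) (m + M) - u (n + 1) m))
        = ((u n (m + 3 * M) - u n (m + M)) * (u n (m + 2 * M) - u n m))
          / ((u n (m + 3 * M) - u n (m + 2 * M)) * (u n (m + M) - u n m)) := by
  intro n m
  have hper := edgeProduct_periodic heq hθM n
  have h₁ : edgeProduct u n (m + M) = edgeProduct u n m := hper m
  have h₂ : edgeProduct u n (m + 2 * M) = edgeProduct u n m := hper.nat_mul 2 m
  have h₃ : edgeProduct u n (m + 3 * M) = edgeProduct u n m := hper.nat_mul 3 m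
  have hden (k : ℤ) : (u k (m + 3 * M) - u k (m + 2 * M)) * (u k (m + M) - u k m) ≠ 0 :=
    mul_ne_zero (sub_ne_zero_of_ne (hne1 k m)) (sub_ne_zero_of_ne (hne2 k m))
  rw [div_eq_div_iff (hden _) (hden _)]
  linear_combination cross_ratio_eq_of_mul_eq rfl h₁ h₂ h₃

/-- For the lattice equation with `θ` a primitive `M`-th root of unity,
`W_{n,m} = ((u_{n,m+3M}-u_{n,m+M})(u_{n,m+2M}-u_{n,m}))/((u_{n,m+3M}-u_{n,m+2M})(u_{n,m+M}-u_{n,m}))`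
is a first integral of order `3M` in the m-direction: `W_{n+1,m} = W_{n,m}`. -/
theorem stmt_3 (M : ℕ) (hM : 1 ≤ M) (θ : ℂ) (hθM : θ ^ M = 1)
    (hθprim : ∀ j : ℕ, 1 ≤ j → j ≤ M - 1 → θ ^ j ≠ 1)
    (u : ℤ → ℤ → ℂ)
    (heq : ∀ n m : ℤ,
      (u (n + 1) (m + 1) + 1) * (u n (m + 1) - 1)
        = θ * ((u (n + 1) m + 1) * (u n m - 1)))
    (hne1 : ∀ n m : ℤ, u n (m + 3 * M) ≠ u n (m + 2 * M))
    (hne2 : ∀ n m : ℤ, u n (m + M) ≠ u n m) :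
    ∀ n m : ℤ,
      ((u (n + 1) (m + 3 * M) - u (n + 1) (m + M)) * (u (n + 1) (m + 2 * M) - u (n + 1) m))
          / ((u (n + 1) (m + 3 * M) - u (n + 1) (m + 2 * M)) * (u (n + 1) (m + M) - u (n + 1) m))
        = ((u n (m + 3 * M) - u n (m + M)) * (u n (m + 2 * M) - u n m))
          / ((u n (m + 3 * M) - u n (m + 2 * M)) * (u n (m + M) - u n m)) :=
  stmt_3_general M θ hθM u heq hne1 hne2
end

section
/- Let β : ℤ → ℂ and ω : ℤ → ℂ be arbitrary functions such that β_{n+1} ≠ β_{n-1} and β_n + ω_m ≠ 0 for all n,m ∈ ℤ. Then the function u_{n,m} = (β_{n+1} - 2β_n + β_{n-1})/(β_{n+1} - β_{n-1}) - 2 (β_{n+1} - β_n)(β_n - β_{n-1}) / ((β_{n+1} - β_{n-1})(β_n + ω_m)) satisfies (u_{n+1,m+1}+1)(u_{n,m+1}-1) = (u_{n+1,m}+1)(u_{n,m}-1) for all n,m ∈ ℤ. Thus this formula gives the explicit general solution of the equation with θ = 1. -/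
/-!
Both `u + 1` and `u - 1` factor: with `β₊, β, β₋` the values at `n + 1, n, n - 1`,
`u + 1 = 2 (β₊ - β)(β₋ + ω) / ((β₊ - β₋)(β + ω))` and
`u - 1 = -2 (β - β₋)(β₊ + ω) / ((β₊ - β₋)(β + ω))`.
In `(u_{n+1,m} + 1)(u_{n,m} - 1)` the factors `β_n + ω_m` and `β_{n+1} + ω_m` cancel, so this
product does not depend on `m`, which is the lattice equation.
-/

namespace LatticeThetaOne

variable {K : Type*} [Field K]

/-- The value `u_{n,m}` in terms of `a = β_{n+1}`, `b = β_n`, `c = β_{n-1}` and `w = ω_m`. -/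
def solution (a b c w : K) : K :=
  (a - 2 * b + c) / (a - c) - 2 * ((a - b) * (b - c)) / ((a - c) * (b + w))

theorem solution_add_one {a b c w : K} (hac : a - c ≠ 0) (hbw : b + w ≠ 0) :
    solution a b c w + 1 = 2 * (a - b) * (c + w) / ((a - c) * (b + w)) := by
  unfold solution
  field_simp
  ring

theorem solution_sub_one {a b c w : K} (hac : a - c ≠ 0) (hbw : b + w ≠ 0) :
    solution a b c w - 1 = -2 * (b - c) * (a + w) / ((a - c) * (b + w)) := by
  unfold solution
  field_simp
  ring

theorem solution_add_one_mul_solution_sub_one {d a b c w : K} (hdb : d - b ≠ 0)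
    (hac : a - c ≠ 0) (haw : a + w ≠ 0) (hbw : b + w ≠ 0) :
    (solution d a b w + 1) * (solution a b c w - 1)
      = -4 * (d - a) * (b - c) / ((d - b) * (a - c)) := by
  rw [solution_add_one hdb haw, solution_sub_one hac hbw]
  field_simp
  ring

end LatticeThetaOne

/-- Explicit general solution of the lattice equation with `θ = 1`:
`u_{n,m} = (β_{n+1}-2β_n+β_{n-1})/(β_{n+1}-β_{n-1}) - 2(β_{n+1}-β_n)(β_n-β_{n-1})/((β_{n+1}-β_{n-1})(β_n+ω_m))`
satisfies `(u_{n+1,m+1}+1)(u_{n,m+1}-1) = (u_{n+1,m}+1)(u_{n,m}-1)`. -/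
theorem stmt_5 (β ω : ℤ → ℂ)
    (hβ : ∀ n : ℤ, β (n + 1) ≠ β (n - 1))
    (hβω : ∀ n m : ℤ, β n + ω m ≠ 0)
    (u : ℤ → ℤ → ℂ)
    (hu : ∀ n m : ℤ, u n m =
      (β (n + 1) - 2 * β n + β (n - 1)) / (β (n + 1) - β (n - 1))
        - 2 * ((β (n + 1) - β n) * (β n - β (n - 1)))
            / ((β (n + 1) - β (n - 1)) * (β n + ω m))) :
    ∀ n m : ℤ,
      (u (n + 1) (m + 1) + 1) * (u n (m + 1) - 1)
        = (u (n + 1) m + 1) * (u n m - 1) := by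
  intro n m
  have hdiff : ∀ k, β (k + 1) - β (k - 1) ≠ 0 := fun k => sub_ne_zero.mpr (hβ k)
  have hm_free : ∀ m, (u (n + 1) m + 1) * (u n m - 1)
      = -4 * (β (n + 1 + 1) - β (n + 1)) * (β n - β (n - 1))
        / ((β (n + 1 + 1) - β n) * (β (n + 1) - β (n - 1))) := by
    intro m
    have hdb := hdiff (n + 1)
    rw [add_sub_cancel_right] at hdb
    rw [hu, hu, add_sub_cancel_right]
    exact LatticeThetaOne.solution_add_one_mul_solution_sub_one hdb (hdiff n)
      (hβω _ _) (hβω _ _)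
  rw [hm_free, hm_free]
end

section
/- Let α : ℤ → ℂ with α_n ≠ 1 for all n, let v : ℤ × ℤ → ℂ with v_{n,m} ≠ 0 for all n,m, and define u_{n,m} = α_n + (α_n - 1)/v_{n,m} and λ_n = (α_{n+1}+1)(α_n-1). Then u satisfies the discrete Riccati equation (u_{n+1,m}+1)(u_{n,m}-1) = λ_n for all n,m ∈ ℤ if and only if v satisfies the linear equation ((α_{n+1}+1)/(α_{n+1}-1)) v_{n+1,m} + v_{n,m} + 1 = 0 for all n,m ∈ ℤ. -/
/-!
Since `α` is a particular solution, the defect of the Riccati equation at `u = α + (α - 1)/v`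
factors as `(α_n - 1)(α_{n+1} - 1)/(v_{n,m} v_{n+1,m})` times the left-hand side of the linear
equation; under the nondegeneracy hypotheses the prefactor does not vanish.
-/

section Field

variable {K : Type*} [Field K]

theorem riccati_defect_eq_mul_linear (a b x y : K) (hb : b ≠ 1) (hx : x ≠ 0) (hy : y ≠ 0) :
    (b + (b - 1) / y + 1) * (a + (a - 1) / x - 1) - (b + 1) * (a - 1) =
      (a - 1) * (b - 1) / (x * y) * ((b + 1) / (b - 1) * y + x + 1) := by
  have hb' : b - 1 ≠ 0 := sub_ne_zero.mpr hb
  field_simp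
  ring

theorem riccati_iff_linear {a b x y : K} (ha : a ≠ 1) (hb : b ≠ 1) (hx : x ≠ 0) (hy : y ≠ 0) :
    (b + (b - 1) / y + 1) * (a + (a - 1) / x - 1) = (b + 1) * (a - 1) ↔
      (b + 1) / (b - 1) * y + x + 1 = 0 := by
  have hprefactor : (a - 1) * (b - 1) / (x * y) ≠ 0 := by
    have := sub_ne_zero.mpr ha
    have := sub_ne_zero.mpr hb
    positivity
  rw [← sub_eq_zero, riccati_defect_eq_mul_linear a b x y hb hx hy, mul_eq_zero,
    or_iff_right hprefactor]

end Field

/-- With `u_{n,m} = α_n + (α_n-1)/v_{n,m}` and `λ_n = (α_{n+1}+1)(α_n-1)`,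
`u` solves the discrete Riccati equation `(u_{n+1,m}+1)(u_{n,m}-1) = λ_n` iff
`v` solves the linear equation `((α_{n+1}+1)/(α_{n+1}-1)) v_{n+1,m} + v_{n,m} + 1 = 0`. -/
theorem stmt_6 (α : ℤ → ℂ) (hα : ∀ n : ℤ, α n ≠ 1)
    (v : ℤ → ℤ → ℂ) (hv : ∀ n m : ℤ, v n m ≠ 0)
    (u : ℤ → ℤ → ℂ)
    (hu : ∀ n m : ℤ, u n m = α n + (α n - 1) / v n m)
    (lam : ℤ → ℂ)
    (hlam : ∀ n : ℤ, lam n = (α (n + 1) + 1) * (α n - 1)) :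
    (∀ n m : ℤ, (u (n + 1) m + 1) * (u n m - 1) = lam n)
      ↔ (∀ n m : ℤ,
          (α (n + 1) + 1) / (α (n + 1) - 1) * v (n + 1) m + v n m + 1 = 0) := by
  refine forall₂_congr fun n m => ?_
  rw [hu, hu, hlam]
  exact riccati_iff_linear (hα n) (hα (n + 1)) (hv n m) (hv (n + 1) m)
end

section
/- Let M ≥ 1 and let θ ∈ ℂ satisfy θ^M = 1. Let u : ℤ × ℤ → ℂ satisfy (u_{n+1,m+1}+1)(u_{n,m+1}-1) = θ (u_{n+1,m}+1)(u_{n,m}-1) for all n,m ∈ ℤ. For each j with 1 ≤ j ≤ M define u^{(j)}_{n,k} = u_{n, Mk + j}. Then each u^{(j)} satisfies the θ = 1 equation: (u^{(j)}_{n+1,k+1}+1)(u^{(j)}_{n,k+1}-1) = (u^{(j)}_{n+1,k}+1)(u^{(j)}_{n,k}-1) for all n,k ∈ ℤ. -/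
/-!
Along each column pair `(n, n+1)` the quantity `(u_{n+1,m}+1)(u_{n,m}-1)` gets multiplied by `θ`
at every step in `m`, so after `M` steps it is multiplied by `θ^M = 1`. Hence it is `M`-periodic in
`m`, which is exactly the `θ = 1` equation on each sublattice.
-/

section GeometricStep

variable {R : Type*} [Monoid R] {q : ℤ → R} {θ : R}

theorem add_natCast_eq_pow_mul_of_step (h : ∀ m, q (m + 1) = θ * q m) (m : ℤ) (t : ℕ) :
    q (m + t) = θ ^ t * q m := by
  induction t with
  | zero => simp
  | succ t ih =>
    rw [Nat.cast_succ, ← add_assoc, h, ih, pow_succ', mul_assoc]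

theorem periodic_of_step_of_pow_eq_one (h : ∀ m, q (m + 1) = θ * q m) {M : ℕ}
    (hθ : θ ^ M = 1) : Function.Periodic q (M : ℤ) := fun m => by
  rw [add_natCast_eq_pow_mul_of_step h, hθ, one_mul]

end GeometricStep

theorem stmt_8_general (M : ℕ) (θ : ℂ) (hθ : θ ^ M = 1) (u : ℤ → ℤ → ℂ)
    (heq : ∀ n m : ℤ,
      (u (n + 1) (m + 1) + 1) * (u n (m + 1) - 1)
        = θ * ((u (n + 1) m + 1) * (u n m - 1))) :
    ∀ j : ℤ, 1 ≤ j → j ≤ M → ∀ n k : ℤ,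
      (u (n + 1) (M * (k + 1) + j) + 1) * (u n (M * (k + 1) + j) - 1)
        = (u (n + 1) (M * k + j) + 1) * (u n (M * k + j) - 1) := by
  intro j _ _ n k
  have hperiodic : Function.Periodic (fun m => (u (n + 1) m + 1) * (u n m - 1)) (M : ℤ) :=
    periodic_of_step_of_pow_eq_one (heq n) hθ
  rw [show (M : ℤ) * (k + 1) + j = M * k + j + M by ring]
  exact hperiodic (M * k + j)

/-- If `θ^M = 1` and `u` solves the lattice equation, then each
sublattice function `u^{(j)}_{n,k} = u_{n,Mk+j}` (`1 ≤ j ≤ M`) solves the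
equation with `θ = 1`. -/
theorem stmt_8 (M : ℕ) (hM : 1 ≤ M) (θ : ℂ) (hθ : θ ^ M = 1) (u : ℤ → ℤ → ℂ)
    (heq : ∀ n m : ℤ,
      (u (n + 1) (m + 1) + 1) * (u n (m + 1) - 1)
        = θ * ((u (n + 1) m + 1) * (u n m - 1))) :
    ∀ j : ℤ, 1 ≤ j → j ≤ M → ∀ n k : ℤ,
      (u (n + 1) (M * (k + 1) + j) + 1) * (u n (M * (k + 1) + j) - 1)
        = (u (n + 1) (M * k + j) + 1) * (u n (M * k + j) - 1) :=
  stmt_8_general M θ hθ u heq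
end

section
/- Let γ : ℤ → ℂ satisfy γ_{n+1} γ_n ≠ -1 for all n ∈ ℤ, and define α^{(1)}_n = -(γ_{n+1}γ_n + 2γ_{n+1} - 1)/(γ_{n+1}γ_n + 1) and α^{(2)}_n = (γ_{n+1}γ_n - 2γ_n - 1)/(γ_{n+1}γ_n + 1). Then (α^{(1)}_{n+1}+1)(α^{(1)}_n - 1) = -(α^{(2)}_{n+1}+1)(α^{(2)}_n - 1) for all n ∈ ℤ. -/
/-!
With `D_n = γ_{n+1} γ_n + 1`, each of the four factors is a single fraction over `D_n`:
`α⁽¹⁾_n + 1 = 2(1 - γ_{n+1}) / D_n`, `α⁽¹⁾_n - 1 = -2γ_{n+1}(γ_n + 1) / D_n`,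
`α⁽²⁾_n + 1 = 2γ_n(γ_{n+1} - 1) / D_n` and `α⁽²⁾_n - 1 = -2(γ_n + 1) / D_n`.
Both sides of the relation then equal `4 γ_{n+1} (γ_{n+2} - 1)(γ_n + 1) / (D_{n+1} D_n)`.
-/

section

variable {K : Type*} [Field K] {a b : K}

/-- `alphaOne a b` and `alphaTwo a b` are `α⁽¹⁾_n` and `α⁽²⁾_n` at `a = γ_n`, `b = γ_{n+1}`. -/
def alphaOne (a b : K) : K := -((b * a + 2 * b - 1) / (b * a + 1))

def alphaTwo (a b : K) : K := (b * a - 2 * a - 1) / (b * a + 1)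

lemma add_one_ne_zero_of_mul_ne_neg_one (h : b * a ≠ -1) : b * a + 1 ≠ 0 :=
  fun h' => h (eq_neg_of_add_eq_zero_left h')

lemma alphaOne_add_one (h : b * a ≠ -1) :
    alphaOne a b + 1 = 2 * (1 - b) / (b * a + 1) := by
  have := add_one_ne_zero_of_mul_ne_neg_one h
  unfold alphaOne
  field_simp
  ring

lemma alphaOne_sub_one (h : b * a ≠ -1) :
    alphaOne a b - 1 = -2 * b * (a + 1) / (b * a + 1) := by
  have := add_one_ne_zero_of_mul_ne_neg_one h
  unfold alphaOne
  field_simp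
  ring

lemma alphaTwo_add_one (h : b * a ≠ -1) :
    alphaTwo a b + 1 = 2 * a * (b - 1) / (b * a + 1) := by
  have := add_one_ne_zero_of_mul_ne_neg_one h
  unfold alphaTwo
  field_simp
  ring

lemma alphaTwo_sub_one (h : b * a ≠ -1) :
    alphaTwo a b - 1 = -2 * (a + 1) / (b * a + 1) := by
  have := add_one_ne_zero_of_mul_ne_neg_one h
  unfold alphaTwo
  field_simp
  ring

end

/-- With `α^{(1)}_n = -(γ_{n+1}γ_n+2γ_{n+1}-1)/(γ_{n+1}γ_n+1)` and
`α^{(2)}_n = (γ_{n+1}γ_n-2γ_n-1)/(γ_{n+1}γ_n+1)`, one has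
`(α^{(1)}_{n+1}+1)(α^{(1)}_n-1) = -(α^{(2)}_{n+1}+1)(α^{(2)}_n-1)`. -/
theorem stmt_9 (γ : ℤ → ℂ) (hγ : ∀ n : ℤ, γ (n + 1) * γ n ≠ -1)
    (α₁ α₂ : ℤ → ℂ)
    (hα₁ : ∀ n : ℤ, α₁ n =
      -((γ (n + 1) * γ n + 2 * γ (n + 1) - 1) / (γ (n + 1) * γ n + 1)))
    (hα₂ : ∀ n : ℤ, α₂ n =
      (γ (n + 1) * γ n - 2 * γ n - 1) / (γ (n + 1) * γ n + 1)) :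
    ∀ n : ℤ,
      (α₁ (n + 1) + 1) * (α₁ n - 1) = -((α₂ (n + 1) + 1) * (α₂ n - 1)) := by
  obtain rfl : α₁ = fun n => alphaOne (γ n) (γ (n + 1)) := funext hα₁
  obtain rfl : α₂ = fun n => alphaTwo (γ n) (γ (n + 1)) := funext hα₂
  intro n
  rw [alphaOne_add_one (hγ (n + 1)), alphaOne_sub_one (hγ n),
    alphaTwo_add_one (hγ (n + 1)), alphaTwo_sub_one (hγ n)]
  ring
end

section
/- Let γ : ℤ → ℂ with γ_{n+1}γ_n ≠ -1 for all n, define α^{(1)}_n = -(γ_{n+1}γ_n + 2γ_{n+1} - 1)/(γ_{n+1}γ_n + 1) and α^{(2)}_n = (γ_{n+1}γ_n - 2γ_n - 1)/(γ_{n+1}γ_n + 1), and assume α^{(j)}_n ≠ 1 for all n and j = 1,2. Let β^{(1)}, β^{(2)} : ℤ → ℂ satisfy β^{(j)}_{n+1} ≠ β^{(j)}_n and (α^{(j)}_{n+1}+1)/(α^{(j)}_{n+1}-1) = -(β^{(j)}_{n+2}-β^{(j)}_{n+1})/(β^{(j)}_{n+1}-β^{(j)}_n) for all n and j = 1,2.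 Let ω : ℤ → ℂ satisfy β^{(j)}_n + ω_m ≠ 0 for all n,m and j = 1,2. Set χ_m = (1 + (-1)^m)/2 and define u_{n,m} = χ_{m+1}·(α^{(1)}_n + (α^{(1)}_n - 1)(β^{(1)}_{n+1} - β^{(1)}_n)/(β^{(1)}_n + ω_m)) + χ_m·(α^{(2)}_n + (α^{(2)}_n - 1)(β^{(2)}_{n+1} - β^{(2)}_n)/(β^{(2)}_n + ω_m)). Then u satisfies (u_{n+1,m+1}+1)(u_{n,m+1}-1) = -(u_{n+1,m}+1)(u_{n,m}-1) for all n,m ∈ ℤ. -/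
/-!
For a fixed parity of `m`, the row `n ↦ u n m` is one of the two sequences
`v n = α n + (α n - 1) (β (n + 1) - β n) / (β n + w)` with `w = ω m`, and the discrete
integration relation between `α` and `β` makes `(v (n + 1) + 1) (v n - 1)` equal to
`(α (n + 1) + 1) (α n - 1)`, whatever `w` is. Since `χ` switches the two sequences on
consecutive rows, the lattice equation reduces to
`(α₁ (n + 1) + 1) (α₁ n - 1) = -((α₂ (n + 1) + 1) (α₂ n - 1))`, a rational identity in `γ`.
-/

section

variable {K : Type*} [Field K]

def dressedSeq (α β : ℤ → K) (w : K) (n : ℤ) : K :=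
  α n + (α n - 1) * (β (n + 1) - β n) / (β n + w)

lemma mul_sub_eq_of_div_eq_neg_div {a b b' b'' : K} (ha : a ≠ 1) (hb : b' ≠ b)
    (h : (a + 1) / (a - 1) = -((b'' - b') / (b' - b))) :
    (a + 1) * (b' - b) = -((a - 1) * (b'' - b')) := by
  have ha' := sub_ne_zero.mpr ha
  have hb' := sub_ne_zero.mpr hb
  field_simp at h
  linear_combination h

lemma dressedSeq_succ_add_one_mul_sub_one {α β : ℤ → K} {w : K} {n : ℤ}
    (hα : α (n + 1) ≠ 1) (hβ : β (n + 1) ≠ β n)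
    (hαβ : (α (n + 1) + 1) / (α (n + 1) - 1)
      = -((β (n + 2) - β (n + 1)) / (β (n + 1) - β n)))
    (hw : β n + w ≠ 0) (hw' : β (n + 1) + w ≠ 0) :
    (dressedSeq α β w (n + 1) + 1) * (dressedSeq α β w n - 1)
      = (α (n + 1) + 1) * (α n - 1) := by
  have hrec := mul_sub_eq_of_div_eq_neg_div hα hβ hαβ
  rw [dressedSeq, dressedSeq, show n + 1 + 1 = n + 2 by ring]
  field_simp
  linear_combination (α n - 1) * (β (n + 1) + w) * hrec

/- With `D n = γ (n + 1) γ n + 1` one has `α₁ n + 1 = 2 (1 - γ (n + 1)) / D n`,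
`α₁ n - 1 = -2 γ (n + 1) (γ n + 1) / D n`, `α₂ n + 1 = 2 γ n (γ (n + 1) - 1) / D n` and
`α₂ n - 1 = -2 (γ n + 1) / D n`. -/
lemma alpha_add_one_mul_sub_one_eq_neg {γ α₁ α₂ : ℤ → K}
    (hγ : ∀ n : ℤ, γ (n + 1) * γ n ≠ -1)
    (hα₁ : ∀ n : ℤ, α₁ n =
      -((γ (n + 1) * γ n + 2 * γ (n + 1) - 1) / (γ (n + 1) * γ n + 1)))
    (hα₂ : ∀ n : ℤ, α₂ n =
      (γ (n + 1) * γ n - 2 * γ n - 1) / (γ (n + 1) * γ n + 1))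
    (n : ℤ) :
    (α₁ (n + 1) + 1) * (α₁ n - 1) = -((α₂ (n + 1) + 1) * (α₂ n - 1)) := by
  have hD : γ (n + 1) * γ n + 1 ≠ 0 := fun h => hγ n (eq_neg_of_add_eq_zero_left h)
  have hD' : γ (n + 1 + 1) * γ (n + 1) + 1 ≠ 0 :=
    fun h => hγ (n + 1) (eq_neg_of_add_eq_zero_left h)
  rw [hα₁, hα₁, hα₂, hα₂]
  field_simp
  ring

end

lemma one_add_neg_one_zpow_div_two_of_even {m : ℤ} (hm : Even m) :
    (1 + (-1 : ℂ) ^ m) / 2 = 1 := by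
  rw [hm.neg_one_zpow]; norm_num

lemma one_add_neg_one_zpow_div_two_of_odd {m : ℤ} (hm : Odd m) :
    (1 + (-1 : ℂ) ^ m) / 2 = 0 := by
  rw [hm.neg_one_zpow]; norm_num

/-- General solution in quadratures of the lattice equation with
`θ = -1` (the case `M = 2`): with `α^{(1)}, α^{(2)}` expressed through an
arbitrary function `γ`, `β^{(1)}, β^{(2)}` obtained by discrete integration,
an arbitrary function `ω`, and `χ_m = (1+(-1)^m)/2`, the function
`u_{n,m} = χ_{m+1}(α^{(1)}_n + (α^{(1)}_n-1)(β^{(1)}_{n+1}-β^{(1)}_n)/(β^{(1)}_n+ω_m))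
         + χ_m(α^{(2)}_n + (α^{(2)}_n-1)(β^{(2)}_{n+1}-β^{(2)}_n)/(β^{(2)}_n+ω_m))`
satisfies `(u_{n+1,m+1}+1)(u_{n,m+1}-1) = -(u_{n+1,m}+1)(u_{n,m}-1)`. -/
theorem stmt_10 (γ : ℤ → ℂ) (hγ : ∀ n : ℤ, γ (n + 1) * γ n ≠ -1)
    (α₁ α₂ : ℤ → ℂ)
    (hα₁ : ∀ n : ℤ, α₁ n =
      -((γ (n + 1) * γ n + 2 * γ (n + 1) - 1) / (γ (n + 1) * γ n + 1)))
    (hα₂ : ∀ n : ℤ, α₂ n =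
      (γ (n + 1) * γ n - 2 * γ n - 1) / (γ (n + 1) * γ n + 1))
    (hα₁ne1 : ∀ n : ℤ, α₁ n ≠ 1) (hα₂ne1 : ∀ n : ℤ, α₂ n ≠ 1)
    (β₁ β₂ : ℤ → ℂ)
    (hβ₁ne : ∀ n : ℤ, β₁ (n + 1) ≠ β₁ n) (hβ₂ne : ∀ n : ℤ, β₂ (n + 1) ≠ β₂ n)
    (hβ₁ : ∀ n : ℤ, (α₁ (n + 1) + 1) / (α₁ (n + 1) - 1)
      = -((β₁ (n + 2) - β₁ (n + 1)) / (β₁ (n + 1) - β₁ n)))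
    (hβ₂ : ∀ n : ℤ, (α₂ (n + 1) + 1) / (α₂ (n + 1) - 1)
      = -((β₂ (n + 2) - β₂ (n + 1)) / (β₂ (n + 1) - β₂ n)))
    (ω : ℤ → ℂ)
    (hω₁ : ∀ n m : ℤ, β₁ n + ω m ≠ 0) (hω₂ : ∀ n m : ℤ, β₂ n + ω m ≠ 0)
    (χ : ℤ → ℂ) (hχ : ∀ m : ℤ, χ m = (1 + (-1 : ℂ) ^ m) / 2)
    (u : ℤ → ℤ → ℂ)
    (hu : ∀ n m : ℤ, u n m =
      χ (m + 1) * (α₁ n + (α₁ n - 1) * (β₁ (n + 1) - β₁ n) / (β₁ n + ω m))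
        + χ m * (α₂ n + (α₂ n - 1) * (β₂ (n + 1) - β₂ n) / (β₂ n + ω m))) :
    ∀ n m : ℤ,
      (u (n + 1) (m + 1) + 1) * (u n (m + 1) - 1)
        = -((u (n + 1) m + 1) * (u n m - 1)) := by
  intro n m
  have hu' : ∀ n m : ℤ, u n m =
      χ (m + 1) * dressedSeq α₁ β₁ (ω m) n + χ m * dressedSeq α₂ β₂ (ω m) n := hu
  have h₁ : ∀ m : ℤ, (dressedSeq α₁ β₁ (ω m) (n + 1) + 1) * (dressedSeq α₁ β₁ (ω m) n - 1)
      = (α₁ (n + 1) + 1) * (α₁ n - 1) := fun m =>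
    dressedSeq_succ_add_one_mul_sub_one (hα₁ne1 _) (hβ₁ne n) (hβ₁ n) (hω₁ n m) (hω₁ _ m)
  have h₂ : ∀ m : ℤ, (dressedSeq α₂ β₂ (ω m) (n + 1) + 1) * (dressedSeq α₂ β₂ (ω m) n - 1)
      = (α₂ (n + 1) + 1) * (α₂ n - 1) := fun m =>
    dressedSeq_succ_add_one_mul_sub_one (hα₂ne1 _) (hβ₂ne n) (hβ₂ n) (hω₂ n m) (hω₂ _ m)
  have hα := alpha_add_one_mul_sub_one_eq_neg hγ hα₁ hα₂ n
  simp only [hu', hχ, show m + 1 + 1 = m + 2 by ring]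
  rcases Int.even_or_odd m with hm | hm
  · rw [one_add_neg_one_zpow_div_two_of_even hm, one_add_neg_one_zpow_div_two_of_odd hm.add_one,
      one_add_neg_one_zpow_div_two_of_even (hm.add even_two)]
    simp only [zero_mul, one_mul, zero_add, add_zero]
    rw [h₁, h₂, hα]
  · rw [one_add_neg_one_zpow_div_two_of_odd hm, one_add_neg_one_zpow_div_two_of_even hm.add_one,
      one_add_neg_one_zpow_div_two_of_odd (hm.add_even even_two)]
    simp only [zero_mul, one_mul, zero_add, add_zero]
    rw [h₁, h₂, hα, neg_neg]
end

section
/- Let θ ∈ ℂ be a primitive cube root of unity and let γ : ℤ → ℂ satisfy γ_{n+1}γ_n ≠ θ for all n ∈ ℤ. Define a_n = 2(γ_{n+1} - θ)/(γ_{n+1}γ_n - θ) - 1 and b_n = 2θ(1 - γ_n)/(γ_{n+1}γ_n - θ) + 1. Then (b_{n+1}+1)(b_n-1) = θ (a_{n+1}+1)(a_n-1) for all n ∈ ℤ. -/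
/-- For `θ` a primitive cube root of unity and
`a_n = 2(γ_{n+1}-θ)/(γ_{n+1}γ_n-θ) - 1`, `b_n = 2θ(1-γ_n)/(γ_{n+1}γ_n-θ) + 1`,
one has `(b_{n+1}+1)(b_n-1) = θ (a_{n+1}+1)(a_n-1)`. -/
theorem stmt_11 (θ : ℂ) (hθ3 : θ ^ 3 = 1) (hθ1 : θ ≠ 1)
    (γ : ℤ → ℂ) (hγ : ∀ n : ℤ, γ (n + 1) * γ n ≠ θ)
    (a b : ℤ → ℂ)
    (ha : ∀ n : ℤ, a n = 2 * (γ (n + 1) - θ) / (γ (n + 1) * γ n - θ) - 1)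
    (hb : ∀ n : ℤ, b n = 2 * θ * (1 - γ n) / (γ (n + 1) * γ n - θ) + 1) :
    ∀ n : ℤ,
      (b (n + 1) + 1) * (b n - 1) = θ * ((a (n + 1) + 1) * (a n - 1)) := by
  intro n
  have h1 : γ (n + 1) * γ n - θ ≠ 0 := sub_ne_zero.mpr (hγ n)
  have h2 : γ (n + 1 + 1) * γ (n + 1) - θ ≠ 0 := sub_ne_zero.mpr (hγ (n + 1))
  have h2' : γ (n + 1) * γ (n + 1 + 1) - θ ≠ 0 := by rwa [mul_comm]
  rw [ha, ha, hb, hb]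
  field_simp
  ring
end

section
/- Let θ ∈ ℂ be a primitive cube root of unity, and let γ^{(1)}, γ^{(2)}, δ : ℤ → ℂ be such that for all n ∈ ℤ: γ^{(1)}_n = (δ_{n+1} - 1)/(δ_{n+1} - γ^{(2)}_n) with δ_{n+1} ≠ γ^{(2)}_n, the quadratic relation θ δ_n (γ^{(2)}_n)² - [(θ-1)δ_{n+1}δ_n + δ_{n+1} + δ_n + θ² - 1] γ^{(2)}_n + θ² δ_{n+1} = 0 holds, and γ^{(1)}_n ≠ 1, γ^{(2)}_n ≠ 1, γ^{(2)}_{n+1} ≠ 0, γ^{(1)}_{n+1} ≠ θ. Then the two expressions for (α^{(2)}_n+1)/(α^{(2)}_n-1) agree: γ^{(1)}_n (θ - γ^{(1)}_{n+1}) / (θ (γ^{(1)}_n - 1)) = (θ - γ^{(2)}_{n+1}) / (γ^{(2)}_{n+1} (γ^{(2)}_n - 1)) for all n ∈ ℤ. -/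
/-- Consistency of the two parametrizations of `α^{(2)}_n` in the
case `M = 3`: under the relations encoded by the arbitrary function `δ`,
`γ^{(1)}_n(θ-γ^{(1)}_{n+1})/(θ(γ^{(1)}_n-1)) = (θ-γ^{(2)}_{n+1})/(γ^{(2)}_{n+1}(γ^{(2)}_n-1))`. -/
theorem stmt_12 (θ : ℂ) (hθ3 : θ ^ 3 = 1) (hθ1 : θ ≠ 1)
    (γ₁ γ₂ δ : ℤ → ℂ)
    (hden : ∀ n : ℤ, δ (n + 1) ≠ γ₂ n)
    (hγ₁ : ∀ n : ℤ, γ₁ n = (δ (n + 1) - 1) / (δ (n + 1) - γ₂ n))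
    (hquad : ∀ n : ℤ,
      θ * δ n * (γ₂ n) ^ 2
        - ((θ - 1) * δ (n + 1) * δ n + δ (n + 1) + δ n + θ ^ 2 - 1) * γ₂ n
        + θ ^ 2 * δ (n + 1) = 0)
    (hγ₁ne1 : ∀ n : ℤ, γ₁ n ≠ 1)
    (hγ₂ne1 : ∀ n : ℤ, γ₂ n ≠ 1)
    (hγ₂ne0 : ∀ n : ℤ, γ₂ (n + 1) ≠ 0)
    (hγ₁neθ : ∀ n : ℤ, γ₁ (n + 1) ≠ θ) :
    ∀ n : ℤ,
      γ₁ n * (θ - γ₁ (n + 1)) / (θ * (γ₁ n - 1))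
        = (θ - γ₂ (n + 1)) / (γ₂ (n + 1) * (γ₂ n - 1)) := by
  intro n
  have hθ0 : θ ≠ 0 := by
    intro h; rw [h] at hθ3; norm_num at hθ3
  have hab : δ (n + 1) - γ₂ n ≠ 0 := sub_ne_zero.mpr (hden n)
  have hcd : δ (n + 1 + 1) - γ₂ (n + 1) ≠ 0 := sub_ne_zero.mpr (hden (n + 1))
  have hd0 := hγ₂ne0 n
  have hb1 : γ₂ n - 1 ≠ 0 := sub_ne_zero.mpr (hγ₂ne1 n)
  have hg1 : γ₁ n - 1 ≠ 0 := sub_ne_zero.mpr (hγ₁ne1 n)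
  have hD1 : θ * (γ₁ n - 1) ≠ 0 := mul_ne_zero hθ0 hg1
  have hD2 : γ₂ (n + 1) * (γ₂ n - 1) ≠ 0 := mul_ne_zero hd0 hb1
  rw [div_eq_div_iff hD1 hD2, hγ₁ n, hγ₁ (n + 1)]
  have h2 := hquad (n + 1)
  field_simp
  linear_combination (-(γ₂ n - 1)) * h2
end

section
/- Let M ≥ 1, let θ ∈ ℂ be a primitive M-th root of unity, and let u : ℤ × ℤ → ℂ satisfy (u_{n+1,m+1}+1)(u_{n,m+1}-1) = θ (u_{n+1,m}+1)(u_{n,m}-1) for all n,m ∈ ℤ, with u_{n,m} ≠ -1 and u_{n,m} ≠ 1 for all n,m. Define v_{n,m} = θ (u_{n,m}+1)/(u_{n,m+1}+1). Then: (i) v_{n+1,m} = (u_{n,m+1}-1)/(u_{n,m}-1) for all n,m ∈ ℤ; and (ii) provided v_{n+1,m} v_{n,m} ≠ θ and v_{n+1,m} ≠ 0 and v_{n,m+1} ≠ 0 for all n,m, v satisfies the modified equation (v_{n+1,m+1}-1)(v_{n,m}-θ) = θ (1 - v_{n+1,m}^{-1})(1 - θ v_{n,m+1}^{-1}) for all n,m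 ∈ ℤ. -/
/-!
Part (i) is the lattice equation at `(n, m)` solved for the ratio `v_{n+1,m}`. With (i), all four
values of `v` entering the modified equation at `(n, m)` are Möbius-type expressions in the single
column `a = u_{n,m}`, `b = u_{n,m+1}`, `c = u_{n,m+2}`, and both sides reduce to
`θ (c - b)(a - b) / ((b - 1)(b + 1))`.
-/

section

variable {K : Type*} [Field K] {θ a b a' b' c : K}

theorem mul_div_eq_div_of_mul_eq (h : (b' + 1) * (b - 1) = θ * ((a' + 1) * (a - 1)))
    (hb' : b' + 1 ≠ 0) (ha : a - 1 ≠ 0) :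
    θ * (a' + 1) / (b' + 1) = (b - 1) / (a - 1) := by
  rw [div_eq_div_iff hb' ha]
  linear_combination -h

theorem modified_eq_of_column (hθ : θ ≠ 0) (hb : b - 1 ≠ 0) (hb' : b + 1 ≠ 0) :
    ((c - 1) / (b - 1) - 1) * (θ * (a + 1) / (b + 1) - θ)
      = θ * ((1 - ((b - 1) / (a - 1))⁻¹) * (1 - θ * (θ * (b + 1) / (c + 1))⁻¹)) := by
  rw [inv_div, inv_div]
  field_simp
  ring

end

theorem stmt_13_general (θ : ℂ)
    (u : ℤ → ℤ → ℂ)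
    (heq : ∀ n m : ℤ,
      (u (n + 1) (m + 1) + 1) * (u n (m + 1) - 1)
        = θ * ((u (n + 1) m + 1) * (u n m - 1)))
    (hune : ∀ n m : ℤ, u n m ≠ -1) (hune' : ∀ n m : ℤ, u n m ≠ 1)
    (v : ℤ → ℤ → ℂ)
    (hv : ∀ n m : ℤ, v n m = θ * (u n m + 1) / (u n (m + 1) + 1)) :
    (∀ n m : ℤ, v (n + 1) m = (u n (m + 1) - 1) / (u n m - 1)) ∧
    ((∀ n m : ℤ, v (n + 1) m * v n m ≠ θ) →
     (∀ n m : ℤ, v (n + 1) m ≠ 0) →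
     (∀ n m : ℤ, v n (m + 1) ≠ 0) →
      ∀ n m : ℤ,
        (v (n + 1) (m + 1) - 1) * (v n m - θ)
          = θ * ((1 - (v (n + 1) m)⁻¹) * (1 - θ * (v n (m + 1))⁻¹))) := by
  have hplus : ∀ n m, u n m + 1 ≠ 0 := fun n m => add_eq_zero_iff_eq_neg.not.mpr (hune n m)
  have hminus : ∀ n m, u n m - 1 ≠ 0 := fun n m => sub_ne_zero.mpr (hune' n m)
  have shift : ∀ n m, v (n + 1) m = (u n (m + 1) - 1) / (u n m - 1) := fun n m =>
    (hv _ _).trans (mul_div_eq_div_of_mul_eq (heq n m) (hplus _ _) (hminus _ _))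
  refine ⟨shift, fun _ _ hv_ne n m => ?_⟩
  have hθ : θ ≠ 0 := by
    rintro rfl
    exact hv_ne n m (by rw [hv, zero_mul, zero_div])
  rw [shift n (m + 1), shift n m, hv n m, hv n (m + 1)]
  exact modified_eq_of_column hθ (hminus n (m + 1)) (hplus n (m + 1))

/-- The non-point transformation `v_{n,m} = θ(u_{n,m}+1)/(u_{n,m+1}+1)`
of a solution `u` of the lattice equation satisfies
(i) `v_{n+1,m} = (u_{n,m+1}-1)/(u_{n,m}-1)`, and
(ii) under the nondegeneracy assumptions `v_{n+1,m}v_{n,m} ≠ θ`, `v_{n+1,m} ≠ 0`,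
`v_{n,m+1} ≠ 0`, `v` solves the modified equation
`(v_{n+1,m+1}-1)(v_{n,m}-θ) = θ(1-v_{n+1,m}⁻¹)(1-θv_{n,m+1}⁻¹)`. -/
theorem stmt_13 (M : ℕ) (hM : 1 ≤ M) (θ : ℂ) (hθM : θ ^ M = 1)
    (hθprim : ∀ j : ℕ, 1 ≤ j → j ≤ M - 1 → θ ^ j ≠ 1)
    (u : ℤ → ℤ → ℂ)
    (heq : ∀ n m : ℤ,
      (u (n + 1) (m + 1) + 1) * (u n (m + 1) - 1)
        = θ * ((u (n + 1) m + 1) * (u n m - 1)))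
    (hune : ∀ n m : ℤ, u n m ≠ -1) (hune' : ∀ n m : ℤ, u n m ≠ 1)
    (v : ℤ → ℤ → ℂ)
    (hv : ∀ n m : ℤ, v n m = θ * (u n m + 1) / (u n (m + 1) + 1)) :
    (∀ n m : ℤ, v (n + 1) m = (u n (m + 1) - 1) / (u n m - 1)) ∧
    ((∀ n m : ℤ, v (n + 1) m * v n m ≠ θ) →
     (∀ n m : ℤ, v (n + 1) m ≠ 0) →
     (∀ n m : ℤ, v n (m + 1) ≠ 0) →
      ∀ n m : ℤ,
        (v (n + 1) (m + 1) - 1) * (v n m - θ)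
          = θ * ((1 - (v (n + 1) m)⁻¹) * (1 - θ * (v n (m + 1))⁻¹))) :=
  stmt_13_general θ u heq hune hune' v hv
end

section
/- Let M ≥ 1, let θ ∈ ℂ be a primitive M-th root of unity, and let u : ℤ × ℤ → ℂ satisfy (u_{n+1,m+1}+1)(u_{n,m+1}-1) = θ (u_{n+1,m}+1)(u_{n,m}-1) for all n,m ∈ ℤ, with u_{n,m} ≠ ±1 for all n,m. Define v_{n,m} = θ (u_{n,m}+1)/(u_{n,m+1}+1) and assume v_{n+1,m} v_{n,m} ≠ θ for all n,m. Then u is recovered from v by u_{n,m} = (v_{n+1,m} v_{n,m} - 2 v_{n,m} + θ)/(v_{n+1,m} v_{n,m} - θ) and u_{n,m+1} = -(v_{n+1,m} v_{n,m} - 2θ v_{n+1,m} + θ)/(v_{n+1,m} v_{n,m} - θ) for all n,m ∈ ℤ. -/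
/-- Invertibility of the non-point transformation
`v_{n,m} = θ(u_{n,m}+1)/(u_{n,m+1}+1)` on solutions of the lattice equation:
`u_{n,m} = (v_{n+1,m}v_{n,m} - 2v_{n,m} + θ)/(v_{n+1,m}v_{n,m} - θ)` and
`u_{n,m+1} = -(v_{n+1,m}v_{n,m} - 2θv_{n+1,m} + θ)/(v_{n+1,m}v_{n,m} - θ)`. -/
theorem stmt_14 (M : ℕ) (hM : 1 ≤ M) (θ : ℂ) (hθM : θ ^ M = 1)
    (hθprim : ∀ j : ℕ, 1 ≤ j → j ≤ M - 1 → θ ^ j ≠ 1)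
    (u : ℤ → ℤ → ℂ)
    (heq : ∀ n m : ℤ,
      (u (n + 1) (m + 1) + 1) * (u n (m + 1) - 1)
        = θ * ((u (n + 1) m + 1) * (u n m - 1)))
    (hune : ∀ n m : ℤ, u n m ≠ -1) (hune' : ∀ n m : ℤ, u n m ≠ 1)
    (v : ℤ → ℤ → ℂ)
    (hv : ∀ n m : ℤ, v n m = θ * (u n m + 1) / (u n (m + 1) + 1))
    (hvθ : ∀ n m : ℤ, v (n + 1) m * v n m ≠ θ) :
    ∀ n m : ℤ,
      u n m = (v (n + 1) m * v n m - 2 * v n m + θ) / (v (n + 1) m * v n m - θ) ∧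
      u n (m + 1)
        = -((v (n + 1) m * v n m - 2 * θ * v (n + 1) m + θ)
            / (v (n + 1) m * v n m - θ)) := by
  intro n m
  have hθ0 : θ ≠ 0 := fun h => by simp [h, zero_pow (Nat.one_le_iff_ne_zero.mp hM)] at hθM
  have hb : u n (m+1) + 1 ≠ 0 := fun h => hune n (m+1) (by linear_combination h)
  have hd : u (n+1) (m+1) + 1 ≠ 0 := fun h => hune (n+1) (m+1) (by linear_combination h)
  have h3 := heq n m
  have hden : v (n+1) m * v n m - θ
      = 2*θ*(θ*(u (n+1) m + 1) - (u (n+1) (m+1) + 1))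
        / ((u n (m+1) + 1) * (u (n+1) (m+1) + 1)) := by
    rw [hv n m, hv (n+1) m]
    field_simp
    linear_combination (-1 : ℂ) * h3
  have hnum : v (n+1) m * v n m - 2 * v n m + θ
      = 2*θ*(u n m)*(θ*(u (n+1) m + 1) - (u (n+1) (m+1) + 1))
        / ((u n (m+1) + 1) * (u (n+1) (m+1) + 1)) := by
    rw [hv n m, hv (n+1) m]
    field_simp
    linear_combination h3
  have hnum2 : v (n+1) m * v n m - 2 * θ * v (n+1) m + θ
      = -(2*θ*(u n (m+1))*(θ*(u (n+1) m + 1) - (u (n+1) (m+1) + 1)))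
        / ((u n (m+1) + 1) * (u (n+1) (m+1) + 1)) := by
    rw [hv n m, hv (n+1) m]
    field_simp
    linear_combination (-1 : ℂ) * h3
  have hX : θ*(u (n+1) m + 1) - (u (n+1) (m+1) + 1) ≠ 0 := by
    intro h
    apply hvθ n m
    have h' := hden
    rw [h] at h'
    simp at h'
    linear_combination h'
  constructor
  · rw [hnum, hden]
    field_simp
  · rw [hnum2, hden]
    field_simp
end

section
/- Let M ≥ 1, let θ ∈ ℂ be a primitive M-th root of unity, and let v : ℤ × ℤ → ℂ satisfy the modified equation (v_{n+1,m+1}-1)(v_{n,m}-θ) = θ (1 - v_{n+1,m}^{-1})(1 - θ v_{n,m+1}^{-1}) for all n,m ∈ ℤ, with v_{n,m} ≠ 0 and v_{n+1,m} v_{n,m} ≠ θ for all n,m. Then the function W_{n,m} = θ^{-m} (v_{n+2,m}-1) v_{n+1,m} (v_{n,m}-θ) / ((v_{n+2,m} v_{n+1,m} - θ)(v_{n+1,m} v_{n,m} - θ)) satisfies W_{n,m+1} = W_{n,m} for all n,m ∈ ℤ, i.e. it is a first integral of order 2 in the n-direction. -/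
lemma stmt_15_key (θ a b c p q r : ℂ) (hθ : θ ≠ 0) (hb : b ≠ 0) (hp : p ≠ 0)
    (hc : c ≠ 0) (hq : q ≠ 0)
    (hE1 : (q - 1) * (a - θ) = θ * ((1 - b⁻¹) * (1 - θ * p⁻¹)))
    (hE2 : (r - 1) * (b - θ) = θ * ((1 - c⁻¹) * (1 - θ * q⁻¹)))
    (h1 : c * b - θ ≠ 0) (h2 : b * a - θ ≠ 0) (h3 : r * q - θ ≠ 0) (h4 : q * p - θ ≠ 0) :
    θ⁻¹ * ((r - 1) * q * (p - θ)) / ((r * q - θ) * (q * p - θ))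
      = (c - 1) * b * (a - θ) / ((c * b - θ) * (b * a - θ)) := by
  have E1 : (q - 1) * (a - θ) * (b * p) = θ * ((b - 1) * (p - θ)) := by
    have h := congrArg (· * (b * p)) hE1
    field_simp at h
    linear_combination h
  have E2 : (r - 1) * (b - θ) * (c * q) = θ * ((c - 1) * (q - θ)) := by
    have h := congrArg (· * (c * q)) hE2
    field_simp at h
    linear_combination h
  have key2 : (r - 1) * q * (p - θ) * ((c * b - θ) * (b * a - θ))
      = θ * ((c - 1) * b * (a - θ) * ((r * q - θ) * (q * p - θ))) := by
    linear_combination ((c - 1) * θ * (θ - q * r)) * E1 + ((p - θ) * (a * b - θ)) * E2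
  rw [div_eq_div_iff (mul_ne_zero h3 h4) (mul_ne_zero h1 h2)]
  field_simp
  linear_combination key2

/-- For a solution `v` of the modified equation with `θ` a
primitive `M`-th root of unity, the function
`W_{n,m} = θ^{-m}(v_{n+2,m}-1)v_{n+1,m}(v_{n,m}-θ)/((v_{n+2,m}v_{n+1,m}-θ)(v_{n+1,m}v_{n,m}-θ))`
is a first integral of order 2 in the n-direction: `W_{n,m+1} = W_{n,m}`. -/
theorem stmt_15 (M : ℕ) (hM : 1 ≤ M) (θ : ℂ) (hθM : θ ^ M = 1)
    (hθprim : ∀ j : ℕ, 1 ≤ j → j ≤ M - 1 → θ ^ j ≠ 1)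
    (v : ℤ → ℤ → ℂ)
    (heq : ∀ n m : ℤ,
      (v (n + 1) (m + 1) - 1) * (v n m - θ)
        = θ * ((1 - (v (n + 1) m)⁻¹) * (1 - θ * (v n (m + 1))⁻¹)))
    (hvne0 : ∀ n m : ℤ, v n m ≠ 0)
    (hvθ : ∀ n m : ℤ, v (n + 1) m * v n m ≠ θ) :
    ∀ n m : ℤ,
      θ ^ (-(m + 1)) * ((v (n + 2) (m + 1) - 1) * v (n + 1) (m + 1) * (v n (m + 1) - θ))
          / ((v (n + 2) (m + 1) * v (n + 1) (m + 1) - θ) * (v (n + 1) (m + 1) * v n (m + 1) - θ))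
        = θ ^ (-m) * ((v (n + 2) m - 1) * v (n + 1) m * (v n m - θ))
          / ((v (n + 2) m * v (n + 1) m - θ) * (v (n + 1) m * v n m - θ)) := by
  intro n m
  have hθ : θ ≠ 0 := by
    intro h
    rw [h, zero_pow (by omega : M ≠ 0)] at hθM
    exact zero_ne_one hθM
  have hE1 := heq n m
  have hE2 := heq (n + 1) m
  rw [show n + 1 + 1 = n + 2 by ring] at hE2
  have h1 : v (n + 2) m * v (n + 1) m - θ ≠ 0 := by
    have := hvθ (n + 1) m
    rw [show n + 1 + 1 = n + 2 by ring] at this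
    exact sub_ne_zero.mpr this
  have h2 : v (n + 1) m * v n m - θ ≠ 0 := sub_ne_zero.mpr (hvθ n m)
  have h3 : v (n + 2) (m + 1) * v (n + 1) (m + 1) - θ ≠ 0 := by
    have := hvθ (n + 1) (m + 1)
    rw [show n + 1 + 1 = n + 2 by ring] at this
    exact sub_ne_zero.mpr this
  have h4 : v (n + 1) (m + 1) * v n (m + 1) - θ ≠ 0 := sub_ne_zero.mpr (hvθ n (m + 1))
  have key := stmt_15_key θ (v n m) (v (n + 1) m) (v (n + 2) m) (v n (m + 1))
    (v (n + 1) (m + 1)) (v (n + 2) (m + 1)) hθ (hvne0 (n + 1) m) (hvne0 n (m + 1))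
    (hvne0 (n + 2) m) (hvne0 (n + 1) (m + 1)) hE1 hE2 h1 h2 h3 h4
  have hz : θ ^ (-(m + 1)) = θ ^ (-m) * θ⁻¹ := by
    rw [show -(m + 1) = -m + -1 by ring, zpow_add₀ hθ, zpow_neg_one]
  rw [hz, mul_assoc, mul_div_assoc, mul_div_assoc, ← mul_div_assoc θ⁻¹, key]
  exact (mul_div_assoc _ _ _).symm
end
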